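/- Let ε > 0, n ≥ 2, and let D ∈ ℝ^{(n−1)×n} be the forward difference operator, (Dw)_i = w_{i+1} − w_i. Define ξ : ℝⁿ → ℝ by ξ(w) = Σ_{i=1}^{n−1} log(ε + |(Dw)_i|) − (1/ε)·Σ_{i=1}^{n−1} |(Dw)_i|. Then ξ is continuously differentiable on ℝⁿ, and its gradient is ∇ξ(w) = Dᵀ·s(w), where s(w) ∈ ℝ^{n−1} has coordinates s(w)_i = (1/(ε + |(Dw)_i|) − 1/ε)·sign((Dw)_i), with sign(0) = 0. Equivalently, ∇ξ(w) = Dᵀ diag(1/(ε + |Dw|) − 1/ε) sign(Dw). -/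

import Mathlib

/-! Each summand of `ξ` is `g |t|` at `t = (Dw)_i`, where `g s = log (ε + s) - s / ε` is smooth
near `s = 0` with `g' 0 = 1/ε - 1/ε = 0`. Away from `t = 0` the chain rule through `|·|` applies;
at `t = 0` the vanishing of `g' 0` gives `g |t| - g 0 = o(|t|)`, so the kink of `|·|` is invisible.
The scalar derivative `g' |t| · sign t = -t / (ε (ε + |t|))` is continuous, and the chain rule
through the linear map `D` yields the gradient `Dᵀ s(w)`. -/

/-- The smooth correction term
`ξ(w) = ∑_{i=1}^{n−1} log(ε + |(Dw)_i|) − (1/ε)·∑_{i=1}^{n−1} |(Dw)_i|`, where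
`D` is the forward difference operator `(Dw)_i = w_{i+1} − w_i` on `ℝⁿ`,
`n = m + 2`. -/
noncomputable def xiCorrection (ε : ℝ) (m : ℕ) (w : Fin (m + 2) → ℝ) : ℝ :=
  (∑ i : Fin (m + 1), Real.log (ε + |w i.succ - w i.castSucc|)) -
    (1 / ε) * ∑ i : Fin (m + 1), |w i.succ - w i.castSucc|

/-- The claimed gradient `∇ξ(w) = Dᵀ diag(1/(ε + |Dw|) − 1/ε) sign(Dw)`,
written coordinatewise: `(∇ξ(w))_k = (Dᵀ s(w))_k` where
`s(w)_i = (1/(ε + |(Dw)_i|) − 1/ε)·sign((Dw)_i)` (with `sign 0 = 0`). -/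
noncomputable def xiGradient (ε : ℝ) (m : ℕ) (w : Fin (m + 2) → ℝ) :
    Fin (m + 2) → ℝ :=
  fun k => ∑ i : Fin (m + 1),
    ((1 / (ε + |w i.succ - w i.castSucc|) - 1 / ε) *
        Real.sign (w i.succ - w i.castSucc)) *
      ((if i.succ = k then (1 : ℝ) else 0) - (if i.castSucc = k then (1 : ℝ) else 0))

open Filter Topology Asymptotics

theorem Real.sign_eq_coe_sign (r : ℝ) : Real.sign r = (SignType.sign r : ℝ) := by
  rcases lt_trichotomy r 0 with h | rfl | h <;> simp [Real.sign_of_neg, Real.sign_of_pos, *]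

theorem Real.abs_mul_sign (r : ℝ) : |r| * Real.sign r = r := by
  rw [Real.sign_eq_coe_sign, _root_.abs_mul_sign]

section CompAbs
variable {F : Type*} [NormedAddCommGroup F] [NormedSpace ℝ F] {g : ℝ → F} {g' : F}

theorem HasDerivAt.comp_abs_zero (hg : HasDerivAt g 0 0) :
    HasDerivAt (fun x => g |x|) 0 0 := by
  rw [hasDerivAt_iff_isLittleO] at hg ⊢
  have habs : Tendsto (fun x : ℝ => |x|) (𝓝 0) (𝓝 0) := continuous_abs.tendsto' 0 0 abs_zero
  have hcomp : (fun x => g |x| - g 0) =o[𝓝 0] fun x => |x| := by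
    simpa [Function.comp_def] using hg.comp_tendsto habs
  simpa using isLittleO_abs_right.mp hcomp

theorem HasDerivAt.comp_abs {t : ℝ} (hg : HasDerivAt g g' |t|) (hg' : t = 0 → g' = 0) :
    HasDerivAt (fun x => g |x|) (Real.sign t • g') t := by
  by_cases ht : t = 0
  · subst ht
    rw [hg' rfl, abs_zero] at hg
    simpa [hg' rfl] using hg.comp_abs_zero
  · rw [Real.sign_eq_coe_sign]
    exact hg.scomp t (hasDerivAt_abs ht)

end CompAbs

noncomputable def logAbsCorrection (ε t : ℝ) : ℝ :=
  Real.log (ε + |t|) - |t| / ε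

noncomputable def logAbsCorrectionDeriv (ε t : ℝ) : ℝ :=
  (1 / (ε + |t|) - 1 / ε) * Real.sign t

section LogAbsCorrection
variable {ε : ℝ}

theorem hasDerivAt_logAbsCorrection (hε : 0 < ε) (t : ℝ) :
    HasDerivAt (logAbsCorrection ε) (logAbsCorrectionDeriv ε t) t := by
  have hg : HasDerivAt (fun s => Real.log (ε + s) - s / ε) (1 / (ε + |t|) - 1 / ε) |t| :=
    (((hasDerivAt_id' |t|).const_add ε).log (by positivity)).sub
      ((hasDerivAt_id' |t|).div_const ε)
  have h := hg.comp_abs fun ht => by simp [ht]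
  rwa [smul_eq_mul, mul_comm] at h

theorem logAbsCorrectionDeriv_eq (hε : 0 < ε) (t : ℝ) :
    logAbsCorrectionDeriv ε t = -t / (ε * (ε + |t|)) := by
  have hdiff : 1 / (ε + |t|) - 1 / ε = -|t| / (ε * (ε + |t|)) := by
    field_simp
    ring
  rw [logAbsCorrectionDeriv, hdiff, div_mul_eq_mul_div, neg_mul, Real.abs_mul_sign]

theorem continuous_logAbsCorrectionDeriv (hε : 0 < ε) :
    Continuous (logAbsCorrectionDeriv ε) := by
  simp_rw [funext (logAbsCorrectionDeriv_eq hε)]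
  exact continuous_neg.div (by fun_prop) fun t => by positivity

end LogAbsCorrection

section DifferenceSums
variable {ι κ : Type*} [Fintype ι] [Fintype κ]

theorem hasFDerivAt_sum_comp_sub {φ φ' : ℝ → ℝ} (hφ : ∀ t, HasDerivAt φ (φ' t) t)
    (a b : ι → κ) (w : κ → ℝ) :
    HasFDerivAt (fun v : κ → ℝ => ∑ i, φ (v (a i) - v (b i)))
      (∑ i, φ' (w (a i) - w (b i)) •
        ((ContinuousLinearMap.proj (a i) : (κ → ℝ) →L[ℝ] ℝ) - ContinuousLinearMap.proj (b i))) w :=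
  HasFDerivAt.fun_sum fun i _ =>
    (hφ _).comp_hasFDerivAt w
      ((ContinuousLinearMap.proj (a i) : (κ → ℝ) →L[ℝ] ℝ) -
        ContinuousLinearMap.proj (b i)).hasFDerivAt

theorem sum_smul_proj_sub_proj [DecidableEq κ] (c : ι → ℝ) (a b : ι → κ) :
    ∑ i, c i •
        ((ContinuousLinearMap.proj (a i) : (κ → ℝ) →L[ℝ] ℝ) - ContinuousLinearMap.proj (b i)) =
      ∑ k, (∑ i, c i * ((if a i = k then (1 : ℝ) else 0) - (if b i = k then (1 : ℝ) else 0))) •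
        ContinuousLinearMap.proj k := by
  ext v
  simp only [FunLike.coe_sum, Finset.sum_apply, smul_apply,
    sub_apply, ContinuousLinearMap.proj_apply, smul_eq_mul, Finset.sum_mul]
  rw [Finset.sum_comm]
  refine Finset.sum_congr rfl fun i _ => ?_
  simp only [mul_sub, sub_mul, mul_ite, ite_mul, mul_one, mul_zero, zero_mul,
    Finset.sum_sub_distrib, Finset.sum_ite_eq, Finset.mem_univ, if_true]

end DifferenceSums

theorem xiCorrection_eq_sum (ε : ℝ) (m : ℕ) :
    xiCorrection ε m =
      fun w => ∑ i : Fin (m + 1), logAbsCorrection ε (w i.succ - w i.castSucc) := by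
  funext w
  simp only [xiCorrection, logAbsCorrection, Finset.mul_sum, ← Finset.sum_sub_distrib]
  refine Finset.sum_congr rfl fun i _ => ?_
  ring

/-- Lemma 3.7: for `ε > 0`, the correction term `ξ` is
continuously differentiable on `ℝⁿ`, with gradient
`∇ξ(w) = Dᵀ diag(1/(ε + |Dw|) − 1/ε) sign(Dw)` (here the derivative at `w` is
the continuous linear map `h ↦ ⟨∇ξ(w), h⟩`). -/
theorem xiCorrection_smooth (ε : ℝ) (hε : 0 < ε) (m : ℕ) :
    (∀ w : Fin (m + 2) → ℝ,
        HasFDerivAt (xiCorrection ε m)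
          (∑ k : Fin (m + 2), xiGradient ε m w k •
            (ContinuousLinearMap.proj k :
              (Fin (m + 2) → ℝ) →L[ℝ] ℝ)) w) ∧
      Continuous (xiGradient ε m) := by
  refine ⟨fun w => ?_, ?_⟩
  · rw [xiCorrection_eq_sum]
    have h := hasFDerivAt_sum_comp_sub (hasDerivAt_logAbsCorrection hε) Fin.succ Fin.castSucc w
    rwa [sum_smul_proj_sub_proj] at h
  · exact continuous_pi fun k => continuous_finsetSum _ fun i _ =>
      ((continuous_logAbsCorrectionDeriv hε).comp (by fun_prop)).mul continuous_const
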